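/- Let V be a finite-dimensional real vector space, γ a symmetric bilinear form on V, ℓ a linear functional on V, and ℓ⁽²⁾ ∈ ℝ, and let 𝒜 be the associated symmetric bilinear form on V × ℝ. Assume 𝒜 is nondegenerate and the radical Rad γ is nonzero. Then 𝒜 has Lorentzian signature (i.e., its negative index of inertia equals 1) if and only if γ is positive semidefinite. -/

import Mathlib

open Module

/-- The bilinear form `𝒜` on `V × ℝ` associated to metric hypersurface data `(γ, ℓ, ℓ⁽²⁾)`:
`𝒜((W,a),(Z,b)) = γ(W,Z) + a·ℓ(Z) + b·ℓ(W) + a·b·ℓ⁽²⁾`. -/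
noncomputable def Amap {V : Type*} [AddCommGroup V] [Module ℝ V]
    (γ : LinearMap.BilinForm ℝ V) (ℓ : Module.Dual ℝ V) (ℓ2 : ℝ) :
    LinearMap.BilinForm ℝ (V × ℝ) :=
  LinearMap.mk₂ ℝ
    (fun p q => γ p.1 q.1 + p.2 * ℓ q.1 + q.2 * ℓ p.1 + p.2 * q.2 * ℓ2)
    (fun p p' q => by simp [map_add, LinearMap.add_apply]; ring)
    (fun c p q => by simp [map_smul, LinearMap.smul_apply, smul_eq_mul]; ring)
    (fun p q q' => by simp [map_add, LinearMap.add_apply]; ring)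
    (fun c p q => by simp [map_smul, LinearMap.smul_apply, smul_eq_mul]; ring)

/-- The negative index of inertia of a bilinear form: the maximal dimension of a subspace
on which the form is negative definite. -/
noncomputable def negIndex {V : Type*} [AddCommGroup V] [Module ℝ V]
    (B : LinearMap.BilinForm ℝ V) : ℕ :=
  sSup {k : ℕ | ∃ W : Submodule ℝ V, Module.finrank ℝ W = k ∧
    ∀ x ∈ W, x ≠ 0 → B x x < 0}

/-! A nonzero radical vector `X` of `γ` must have `ℓ X ≠ 0`, otherwise `(X, 0)` lies in the radical
of `𝒜`; hence `(t X, 1)` is `𝒜`-negative for a suitable `t`, and `negIndex 𝒜 ≥ 1`. If `γ ≥ 0`, every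
`𝒜`-negative subspace meets the hyperplane `V × {0}`, on which `𝒜` is `γ`, trivially, so it has
dimension at most one. If `γ Y Y < 0`, moving `Y` along `X` makes `(Y, 0)` orthogonal to `(t X, 1)`,
and the two vectors span a two-dimensional negative definite subspace. -/

section negIndex

variable {M : Type*} [AddCommGroup M] [Module ℝ M] (B : LinearMap.BilinForm ℝ M)

lemma finrank_le_negIndex [FiniteDimensional ℝ M] (W : Submodule ℝ M)
    (hW : ∀ x ∈ W, x ≠ 0 → B x x < 0) : finrank ℝ W ≤ negIndex B :=
  le_csSup ⟨finrank ℝ M, fun _ ⟨W', hW', _⟩ => hW' ▸ W'.finrank_le⟩ ⟨W, rfl, hW⟩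

lemma apply_sum_self_of_iIsOrtho {ι : Type*} [Fintype ι] {v : ι → M} (hv : B.iIsOrtho v)
    (c : ι → ℝ) :
    B (∑ i, c i • v i) (∑ i, c i • v i) = ∑ i, c i ^ 2 * B (v i) (v i) := by
  simp only [LinearMap.BilinForm.sum_left, LinearMap.BilinForm.sum_right,
    LinearMap.BilinForm.smul_left, LinearMap.BilinForm.smul_right]
  refine Finset.sum_congr rfl fun i _ => ?_
  rw [Finset.sum_eq_single i
    (fun j _ hji => by rw [LinearMap.BilinForm.iIsOrtho_def.1 hv _ _ hji, mul_zero]) (by simp)]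
  ring

lemma card_le_negIndex_of_iIsOrtho [FiniteDimensional ℝ M] {ι : Type*} [Fintype ι]
    {v : ι → M} (hv : B.iIsOrtho v) (hneg : ∀ i, B (v i) (v i) < 0) :
    Fintype.card ι ≤ negIndex B := by
  have hli : LinearIndependent ℝ v :=
    LinearMap.BilinForm.linearIndependent_of_iIsOrtho hv fun i => (hneg i).ne
  rw [← finrank_span_eq_card hli]
  refine finrank_le_negIndex B _ fun x hx hx0 => ?_
  obtain ⟨c, rfl⟩ := (Submodule.mem_span_range_iff_exists_fun ℝ).mp hx
  obtain ⟨i, hi⟩ : ∃ i, c i ≠ 0 := by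
    by_contra! h
    simp [h] at hx0
  rw [apply_sum_self_of_iIsOrtho B hv]
  exact Finset.sum_neg' (fun j _ => mul_nonpos_of_nonneg_of_nonpos (sq_nonneg _) (hneg j).le)
    ⟨i, Finset.mem_univ i, mul_neg_of_pos_of_neg (sq_pos_of_ne_zero hi) (hneg i)⟩

lemma negIndex_add_finrank_le [FiniteDimensional ℝ M] (U : Submodule ℝ M)
    (hU : ∀ x ∈ U, 0 ≤ B x x) : negIndex B + finrank ℝ U ≤ finrank ℝ M := by
  suffices negIndex B ≤ finrank ℝ M - finrank ℝ U by have := U.finrank_le; omega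
  refine csSup_le' ?_
  rintro _ ⟨W, rfl, hW⟩
  have hdisj : Disjoint W U := by
    rw [Submodule.disjoint_def]
    intro x hxW hxU
    by_contra hx0
    exact (hW x hxW hx0).not_ge (hU x hxU)
  have := Submodule.finrank_add_finrank_le_of_disjoint hdisj
  omega

end negIndex

section Amap

variable {V : Type*} [AddCommGroup V] [Module ℝ V] {γ : LinearMap.BilinForm ℝ V}
  {ℓ : Module.Dual ℝ V} {ℓ2 : ℝ}

lemma Amap_apply (p q : V × ℝ) :
    Amap γ ℓ ℓ2 p q = γ p.1 q.1 + p.2 * ℓ q.1 + q.2 * ℓ p.1 + p.2 * q.2 * ℓ2 :=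
  rfl

lemma Amap_inl_inl (x y : V) : Amap γ ℓ ℓ2 (x, 0) (y, 0) = γ x y := by
  simp [Amap_apply]

lemma apply_ne_zero_of_mem_ker_of_nondegenerate (hA : (Amap γ ℓ ℓ2).Nondegenerate) {X : V}
    (hX : X ∈ LinearMap.ker γ) (hX0 : X ≠ 0) : ℓ X ≠ 0 := by
  intro hℓX
  refine hX0 (congrArg Prod.fst (hA.1 (X, 0) fun q => ?_))
  simp [Amap_apply, LinearMap.mem_ker.mp hX, hℓX]

-- The coefficient solves `2 t ℓ(X) + ℓ⁽²⁾ = -1`.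
lemma Amap_timelike_self {X : V} (hX : X ∈ LinearMap.ker γ) (hℓX : ℓ X ≠ 0) :
    Amap γ ℓ ℓ2 ((-(1 + ℓ2) / (2 * ℓ X)) • X, 1) ((-(1 + ℓ2) / (2 * ℓ X)) • X, 1) = -1 := by
  simp [Amap_apply, LinearMap.mem_ker.mp hX]
  field_simp
  ring

variable [FiniteDimensional ℝ V]

lemma one_le_negIndex_Amap {X : V} (hX : X ∈ LinearMap.ker γ) (hℓX : ℓ X ≠ 0) :
    1 ≤ negIndex (Amap γ ℓ ℓ2) :=
  card_le_negIndex_of_iIsOrtho (Amap γ ℓ ℓ2) (v := fun _ : Unit => (_, 1))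
    (fun i j hij => (hij (Subsingleton.elim i j)).elim)
    fun _ => (Amap_timelike_self hX hℓX).trans_lt neg_one_lt_zero

lemma two_le_negIndex_Amap (hγ : ∀ X Y : V, γ X Y = γ Y X) {X : V} (hX : X ∈ LinearMap.ker γ)
    (hℓX : ℓ X ≠ 0) {Y : V} (hY : γ Y Y < 0) : 2 ≤ negIndex (Amap γ ℓ ℓ2) := by
  have hXl : ∀ Z, γ X Z = 0 := fun Z => by rw [LinearMap.mem_ker.mp hX, LinearMap.zero_apply]
  have hXr : ∀ Z, γ Z X = 0 := fun Z => (hγ Z X).trans (hXl Z)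
  set Y' := Y - (ℓ Y / ℓ X) • X
  have hℓY' : ℓ Y' = 0 := by simp [Y', hℓX]
  have hγY' : γ Y' Y' = γ Y Y := by simp [Y', hXl, hXr]
  let v : Fin 2 → V × ℝ := ![(Y', 0), ((-(1 + ℓ2) / (2 * ℓ X)) • X, 1)]
  have horth : (Amap γ ℓ ℓ2).iIsOrtho v := by
    rw [LinearMap.BilinForm.iIsOrtho_def]
    intro i j hij
    fin_cases i <;> fin_cases j <;> simp [v, Amap_apply, hXl, hXr, hℓY'] at hij ⊢
  have hneg : ∀ i, Amap γ ℓ ℓ2 (v i) (v i) < 0 := by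
    intro i
    fin_cases i
    · simpa [v, Amap_inl_inl, hγY'] using hY
    · simpa [v] using (Amap_timelike_self hX hℓX).trans_lt neg_one_lt_zero
  simpa using card_le_negIndex_of_iIsOrtho _ horth hneg

lemma negIndex_Amap_le_one (hγ : ∀ X : V, 0 ≤ γ X X) : negIndex (Amap γ ℓ ℓ2) ≤ 1 := by
  have := negIndex_add_finrank_le (Amap γ ℓ ℓ2) (LinearMap.range (LinearMap.inl ℝ V ℝ))
    (by rintro _ ⟨x, rfl⟩; exact (Amap_inl_inl x x).trans_ge (hγ x))
  rw [LinearMap.finrank_range_of_inj LinearMap.inl_injective, Module.finrank_prod,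
    Module.finrank_self] at this
  omega

end Amap

/-- If `𝒜` is nondegenerate and `Rad γ ≠ 0`, then `𝒜` is Lorentzian (negative index `1`)
if and only if `γ` is positive semidefinite. -/
theorem Amap_lorentzian_iff_posSemidef {V : Type*} [AddCommGroup V] [Module ℝ V]
    [FiniteDimensional ℝ V]
    (γ : LinearMap.BilinForm ℝ V) (hγsym : ∀ X Y : V, γ X Y = γ Y X)
    (ℓ : Module.Dual ℝ V) (ℓ2 : ℝ)
    (hA : (Amap γ ℓ ℓ2).Nondegenerate)
    (hrad : LinearMap.ker γ ≠ ⊥) :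
    negIndex (Amap γ ℓ ℓ2) = 1 ↔ ∀ X : V, 0 ≤ γ X X := by
  obtain ⟨X, hX, hX0⟩ := Submodule.exists_mem_ne_zero_of_ne_bot hrad
  have hℓX := apply_ne_zero_of_mem_ker_of_nondegenerate hA hX hX0
  refine ⟨fun hL => ?_, fun hγ =>
    (negIndex_Amap_le_one hγ).antisymm (one_le_negIndex_Amap hX hℓX)⟩
  by_contra! ⟨Y, hY⟩
  have : 2 ≤ negIndex (Amap γ ℓ ℓ2) := two_le_negIndex_Amap hγsym hX hℓX hY
  omega
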